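/- Let z and w be r×N complex matrices of full rank. Then μ(z) = μ(w) if and only if there exists an invertible r×r complex matrix P with z = Pw. In other words, the moment map μ is injective on the Grassmannian G(r,N) of equivalence classes [z] of full-rank matrices under z ~ w iff z = Pw for some invertible P. -/

import Mathlib

open Matrix

/-- The Fubini–Study moment map in homogeneous coordinates:
`μ(z) = zᴴ (z zᴴ)⁻¹ z`. -/
noncomputable def momentMap {r N : ℕ} (z : Matrix (Fin r) (Fin N) ℂ) :
    Matrix (Fin N) (Fin N) ℂ :=
  zᴴ * (z * zᴴ)⁻¹ * z

/-!
A full-rank `z` has the right inverse `zᴴ (z zᴴ)⁻¹`, so `z μ(z) = z`. Hence `μ(z) = μ(w)` gives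
`z = P w` and `w = Q z` with `P = z wᴴ (w wᴴ)⁻¹`, `Q = w zᴴ (z zᴴ)⁻¹`, and `P Q = 1` because `z`
is right-invertible. Conversely `μ(P w) = μ(w)` since the factors `Pᴴ` and `P` produced by
`(P w)ᴴ` and `P w` cancel against `((P w)(P w)ᴴ)⁻¹ = Pᴴ⁻¹ (w wᴴ)⁻¹ P⁻¹`.
-/

namespace Matrix

variable {m n K : Type*} [Fintype m] [DecidableEq m]

theorem isUnit_of_rank_eq_card [Field K] {A : Matrix m m K} (hA : A.rank = Fintype.card m) :
    IsUnit A := by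
  rw [← mulVec_surjective_iff_isUnit]
  change Function.Surjective A.mulVecLin
  rw [← LinearMap.range_eq_top]
  exact Submodule.eq_top_of_finrank_eq (by simpa [rank] using hA)

theorem isUnit_mul_conjTranspose_of_rank_eq_card [Fintype n] [Field K] [PartialOrder K]
    [StarRing K] [StarOrderedRing K] {z : Matrix m n K} (hz : z.rank = Fintype.card m) :
    IsUnit (z * zᴴ) :=
  isUnit_of_rank_eq_card (by rw [rank_self_mul_conjTranspose, hz])

theorem mul_conjTranspose_mul_inv_eq_one [Fintype n] [Field K] [PartialOrder K]
    [StarRing K] [StarOrderedRing K] {z : Matrix m n K} (hz : z.rank = Fintype.card m) :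
    z * (zᴴ * (z * zᴴ)⁻¹) = 1 := by
  rw [← Matrix.mul_assoc, mul_nonsing_inv _
    ((isUnit_iff_isUnit_det _).mp (isUnit_mul_conjTranspose_of_rank_eq_card hz))]

end Matrix

open scoped ComplexOrder

theorem mul_conjTranspose_mul_inv_eq_one_of_rank_eq {r N : ℕ} {z : Matrix (Fin r) (Fin N) ℂ}
    (hz : z.rank = r) : z * (zᴴ * (z * zᴴ)⁻¹) = 1 :=
  mul_conjTranspose_mul_inv_eq_one (hz.trans (Fintype.card_fin r).symm)

theorem eq_mul_of_momentMap_eq {r N : ℕ} {z w : Matrix (Fin r) (Fin N) ℂ} (hz : z.rank = r)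
    (h : momentMap z = momentMap w) : z = z * wᴴ * (w * wᴴ)⁻¹ * w := by
  calc z = z * (zᴴ * (z * zᴴ)⁻¹) * z := by
        rw [mul_conjTranspose_mul_inv_eq_one_of_rank_eq hz, Matrix.one_mul]
    _ = z * momentMap w := by rw [← h, momentMap]; simp only [Matrix.mul_assoc]
    _ = z * wᴴ * (w * wᴴ)⁻¹ * w := by rw [momentMap]; simp only [Matrix.mul_assoc]

theorem momentMap_mul_left {r N : ℕ} {P : Matrix (Fin r) (Fin r) ℂ} (hP : IsUnit P)
    (w : Matrix (Fin r) (Fin N) ℂ) : momentMap (P * w) = momentMap w := by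
  have hPinv : P⁻¹ * P = 1 := nonsing_inv_mul _ ((isUnit_iff_isUnit_det _).mp hP)
  have hPHinv : Pᴴ * Pᴴ⁻¹ = 1 := mul_nonsing_inv _
    ((isUnit_iff_isUnit_det _).mp ((isUnit_conjTranspose P).mpr hP))
  have hgram : P * w * (P * w)ᴴ = P * (w * wᴴ) * Pᴴ := by
    simp only [conjTranspose_mul, Matrix.mul_assoc]
  calc momentMap (P * w) = wᴴ * (Pᴴ * Pᴴ⁻¹) * (w * wᴴ)⁻¹ * (P⁻¹ * P) * w := by
        rw [momentMap, hgram, Matrix.mul_inv_rev, Matrix.mul_inv_rev, conjTranspose_mul]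
        simp only [Matrix.mul_assoc]
    _ = momentMap w := by rw [hPinv, hPHinv, momentMap]; simp only [Matrix.mul_one]

theorem momentMap_eq_iff_left_equiv_general
    (r N : ℕ)
    (z w : Matrix (Fin r) (Fin N) ℂ) (hz : z.rank = r) (hw : w.rank = r) :
    momentMap z = momentMap w ↔
      ∃ P : Matrix (Fin r) (Fin r) ℂ, IsUnit P ∧ z = P * w := by
  constructor
  · intro h
    set P := z * wᴴ * (w * wᴴ)⁻¹
    set Q := w * zᴴ * (z * zᴴ)⁻¹
    have hzP : z = P * w := eq_mul_of_momentMap_eq hz h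
    have hwQ : w = Q * z := eq_mul_of_momentMap_eq hw h.symm
    have hPQ : P * Q = 1 := by
      calc P * Q = P * Q * (z * (zᴴ * (z * zᴴ)⁻¹)) := by
            rw [mul_conjTranspose_mul_inv_eq_one_of_rank_eq hz, Matrix.mul_one]
        _ = P * (Q * z) * (zᴴ * (z * zᴴ)⁻¹) := by simp only [Matrix.mul_assoc]
        _ = 1 := by rw [← hwQ, ← hzP, mul_conjTranspose_mul_inv_eq_one_of_rank_eq hz]
    exact ⟨P, IsUnit.of_mul_eq_one Q hPQ, hzP⟩
  · rintro ⟨P, hP, rfl⟩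
    exact momentMap_mul_left hP w

/-- For full-rank `z` and `w`, `μ(z) = μ(w)` iff `z = P w` for some
invertible `P`; i.e. `μ` is injective on the Grassmannian `G(r,N)`. -/
theorem momentMap_eq_iff_left_equiv
    (r N : ℕ) (hr : 0 < r) (hrN : r ≤ N)
    (z w : Matrix (Fin r) (Fin N) ℂ) (hz : z.rank = r) (hw : w.rank = r) :
    momentMap z = momentMap w ↔
      ∃ P : Matrix (Fin r) (Fin r) ℂ, IsUnit P ∧ z = P * w :=
  momentMap_eq_iff_left_equiv_general r N z w hz hw
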